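/- (Bypassing simplification) Let G = {G_1,...,G_n} with n ≥ 1. Suppose G_1 ≡ {*L} and every option G_j = {G_{j1},...,G_{jm}} of G has some option G_{jℓ} with G_{jℓ} ≡ *L. Then G ≡ *L. The analogous statement holds with *L replaced throughout by *R. -/

import Mathlib

/-- Positions of LR-ending partisan games: two terminals and finite option sets
(represented as lists; set-like behavior is captured by the `Iso` relation). -/
inductive Pos : Type
  | termL : Pos
  | termR : Pos
  | opts : List Pos → Pos

namespace Pos

/-- Valid positions: every non-terminal position has a nonempty set of options. -/
inductive Valid : Pos → Prop
  | termL : Valid termL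
  | termR : Valid termR
  | opts : ∀ gs : List Pos, gs ≠ [] → (∀ g ∈ gs, Valid g) → Valid (opts gs)

/-- Disjunctive sum. -/
def sum : Pos → Pos → Pos
  | termL, termL => termL
  | termL, termR => termR
  | termR, termL => termR
  | termR, termR => termL
  | termL, opts hs => opts (hs.attach.map (fun h => sum termL h.1))
  | termR, opts hs => opts (hs.attach.map (fun h => sum termR h.1))
  | opts gs, termL => opts (gs.attach.map (fun g => sum g.1 termL))
  | opts gs, termR => opts (gs.attach.map (fun g => sum g.1 termR))
  | opts gs, opts hs =>
      opts (gs.attach.map (fun g => sum g.1 (opts hs)) ++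
            hs.attach.map (fun h => sum (opts gs) h.1))
termination_by g h => sizeOf g + sizeOf h
decreasing_by
  all_goals
    first
      | (have := List.sizeOf_lt_of_mem h.2; simp_all; omega)
      | (have := List.sizeOf_lt_of_mem g.2; simp_all; omega)

/-- Conjugate: swap the two kinds of terminal positions. -/
def conj : Pos → Pos
  | termL => termR
  | termR => termL
  | opts gs => opts (gs.attach.map (fun g => conj g.1))
decreasing_by
  have := List.sizeOf_lt_of_mem g.2; simp_all; omega

/-- Isomorphism of game trees (positions viewed as sets of options). -/
def Iso : Pos → Pos → Prop
  | termL, termL => True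
  | termR, termR => True
  | opts gs, opts hs =>
      (∀ g ∈ gs.attach, ∃ h ∈ hs.attach, Iso g.1 h.1) ∧
      (∀ h ∈ hs.attach, ∃ g ∈ gs.attach, Iso g.1 h.1)
  | _, _ => False
termination_by g h => sizeOf g + sizeOf h
decreasing_by
  all_goals
    (have hg := List.sizeOf_lt_of_mem g.2; have hh := List.sizeOf_lt_of_mem h.2;
     simp_all; omega)

inductive Player : Type
  | left : Player
  | right : Player
  deriving DecidableEq

/-- `Wins p b G` : player `p` has a winning strategy from position `G`,
where `b = true` means it is `p`'s turn to move and `b = false` means the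
opponent is to move.  A terminal position is won by the player given by
its label, regardless of whose turn it is. -/
inductive Wins : Player → Bool → Pos → Prop
  | termL : ∀ b, Wins Player.left b termL
  | termR : ∀ b, Wins Player.right b termR
  | move : ∀ (p : Player) (gs : List Pos) (g : Pos), g ∈ gs →
      Wins p false g → Wins p true (opts gs)
  | wait : ∀ (p : Player) (gs : List Pos),
      (∀ g, g ∈ gs → Wins p true g) → Wins p false (opts gs)

inductive Outcome : Type
  | L : Outcome
  | R : Outcome
  | N : Outcome
  | P : Outcome
  deriving DecidableEq

/-- The outcome of a position. -/
noncomputable def outcome (G : Pos) : Outcome := by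
  classical
  exact
    if Wins Player.left true G then
      if Wins Player.left false G then Outcome.L else Outcome.N
    else
      if Wins Player.left false G then Outcome.P else Outcome.R

/-- Equivalence of positions: the outcome agrees in every (valid) context. -/
def equiv (G H : Pos) : Prop :=
  ∀ X : Pos, Valid X → outcome (sum G X) = outcome (sum H X)

end Pos

/-!
Let `t` be `*L` or `*R` and `G = {G_1, …, G_n}` as in the statement. By induction on `X`, whoever
wins `t + X` (with a given player to move) also wins `G + X`: a move of `t + X` inside `X` is copied
in `G + X`; when `X` is terminal, the player to move goes to `G_1 + X`, which behaves like
`{t} + X = {t + X}`; and an opponent's move to `G_j + X` is answered by `G_jℓ + X`, which behaves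
like `t + X`. Since every position is determined, the converse follows from the same statement
for the other player, so `G + X` and `t + X` have the same outcome.
-/

namespace Pos

def IsTerminal (t : Pos) : Prop := t = termL ∨ t = termR

theorem IsTerminal.termL : IsTerminal termL := Or.inl rfl

theorem IsTerminal.termR : IsTerminal termR := Or.inr rfl

@[elab_as_elim]
theorem induction {motive : Pos → Prop} (term : ∀ s, IsTerminal s → motive s)
    (opts : ∀ gs, (∀ g ∈ gs, motive g) → motive (opts gs)) : ∀ X, motive X
  | .termL => term _ .termL
  | .termR => term _ .termR
  | .opts gs => opts gs fun g _ => induction term opts g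
decreasing_by
  have := List.sizeOf_lt_of_mem ‹g ∈ gs›
  simp only [Pos.opts.sizeOf_spec]
  omega

theorem Valid.of_mem {gs : List Pos} {g : Pos} (h : Valid (Pos.opts gs)) (hg : g ∈ gs) :
    Valid g := by
  cases h with | opts _ _ hv => exact hv g hg

theorem IsTerminal.sum {s t : Pos} (hs : IsTerminal s) (ht : IsTerminal t) :
    IsTerminal (sum s t) := by
  rcases hs with rfl | rfl <;> rcases ht with rfl | rfl <;> simp [Pos.sum, IsTerminal]

theorem sum_opts_opts (gs xs : List Pos) :
    sum (opts gs) (opts xs) = opts (gs.map (sum · (opts xs)) ++ xs.map (sum (opts gs) ·)) := by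
  rw [sum]
  simp

theorem sum_opts_of_isTerminal {s : Pos} (hs : IsTerminal s) (gs : List Pos) :
    sum (opts gs) s = opts (gs.map (sum · s)) := by
  rcases hs with rfl | rfl <;> rw [sum] <;> simp

theorem sum_of_isTerminal_opts {t : Pos} (ht : IsTerminal t) (xs : List Pos) :
    sum t (opts xs) = opts (xs.map (sum t ·)) := by
  rcases ht with rfl | rfl <;> rw [sum] <;> simp

def Player.opp : Player → Player
  | .left => .right
  | .right => .left

@[simp]
theorem Player.opp_opp (p : Player) : p.opp.opp = p := by
  cases p <;> rfl

theorem wins_true_opts_iff {p : Player} {gs : List Pos} :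
    Wins p true (opts gs) ↔ ∃ g ∈ gs, Wins p false g := by
  constructor
  · rintro ⟨⟩
    exact ⟨_, ‹_›, ‹_›⟩
  · rintro ⟨g, hg, hw⟩
    exact .move p gs g hg hw

theorem wins_false_opts_iff {p : Player} {gs : List Pos} :
    Wins p false (opts gs) ↔ ∀ g ∈ gs, Wins p true g := by
  constructor
  · rintro ⟨⟩
    assumption
  · exact .wait p gs

theorem wins_termL_iff {p : Player} {b : Bool} : Wins p b termL ↔ p = .left := by
  constructor
  · rintro ⟨⟩
    rfl
  · rintro rfl
    exact .termL b

theorem wins_termR_iff {p : Player} {b : Bool} : Wins p b termR ↔ p = .right := by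
  constructor
  · rintro ⟨⟩
    rfl
  · rintro rfl
    exact .termR b

theorem IsTerminal.wins_of_wins {s : Pos} (hs : IsTerminal s) {p : Player} {b : Bool}
    (h : Wins p b s) (b' : Bool) : Wins p b' s := by
  rcases hs with rfl | rfl
  · exact wins_termL_iff.2 (wins_termL_iff.1 h)
  · exact wins_termR_iff.2 (wins_termR_iff.1 h)

theorem wins_iff_not_wins_opp (X : Pos) (p : Player) (b : Bool) :
    Wins p b X ↔ ¬ Wins p.opp (!b) X := by
  induction X using Pos.induction generalizing p b with
  | term s hs =>
    rcases hs with rfl | rfl <;> cases p <;>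
      simp [wins_termL_iff, wins_termR_iff, Player.opp]
  | opts gs ih =>
    cases b
    · simp only [wins_false_opts_iff, Bool.not_false, wins_true_opts_iff, not_exists, not_and]
      exact forall₂_congr fun g hg => ih g hg p true
    · simp only [wins_true_opts_iff, Bool.not_true, wins_false_opts_iff, not_forall, exists_prop]
      exact exists_congr fun g => and_congr_right fun hg => ih g hg p false

theorem outcome_eq_iff {Y Z : Pos} :
    outcome Y = outcome Z ↔ ∀ p b, (Wins p b Y ↔ Wins p b Z) := by
  constructor
  · intro h
    have hleft : ∀ b, Wins .left b Y ↔ Wins .left b Z := by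
      unfold outcome at h
      split_ifs at h <;> intro b <;> cases b <;> simp_all
    rintro (_ | _) b
    · exact hleft b
    · rw [wins_iff_not_wins_opp Y, wins_iff_not_wins_opp Z]
      exact (hleft _).not
  · intro h
    unfold outcome
    split_ifs <;> simp_all

theorem equiv.wins_sum_iff {G H X : Pos} (h : equiv G H) (hX : Valid X) (p : Player) (b : Bool) :
    Wins p b (sum G X) ↔ Wins p b (sum H X) :=
  outcome_eq_iff.1 (h X hX) p b

theorem wins_true_sum_opts_of_mem {gs : List Pos} {g X : Pos} {p : Player} (hg : g ∈ gs)
    (h : Wins p false (sum g X)) : Wins p true (sum (opts gs) X) := by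
  cases X with
  | termL => exact sum_opts_of_isTerminal .termL gs ▸ .move p _ _ (List.mem_map_of_mem hg) h
  | termR => exact sum_opts_of_isTerminal .termR gs ▸ .move p _ _ (List.mem_map_of_mem hg) h
  | opts xs =>
    rw [sum_opts_opts]
    exact .move p _ _ (List.mem_append_left _ (List.mem_map_of_mem hg)) h

section Bypass

variable {t : Pos} {Gs : List Pos}

theorem wins_true_sum_of_exists_option_equiv {Gj X : Pos} {p : Player}
    (hj : ∃ js, Gj = opts js ∧ ∃ g ∈ js, equiv g t) (hX : Valid X)
    (hw : Wins p false (sum t X)) : Wins p true (sum Gj X) := by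
  obtain ⟨js, rfl, g, hg, hgt⟩ := hj
  exact wins_true_sum_opts_of_mem hg ((hgt.wins_sum_iff hX p false).2 hw)

theorem wins_sum_opts_of_wins_sum_terminal (ht : IsTerminal t)
    (hhead : ∃ G1 ∈ Gs, equiv G1 (opts [t]))
    (hopt : ∀ Gj ∈ Gs, ∃ js, Gj = opts js ∧ ∃ g ∈ js, equiv g t) (X : Pos) (hX : Valid X)
    (p : Player) (b : Bool) (hw : Wins p b (sum t X)) : Wins p b (sum (opts Gs) X) := by
  induction X using Pos.induction generalizing p b with
  | term s hs =>
    have hu := (ht.sum hs).wins_of_wins hw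
    cases b
    · rw [sum_opts_of_isTerminal hs, wins_false_opts_iff]
      simp only [List.mem_map, forall_exists_index, and_imp]
      rintro _ Gj hGj rfl
      exact wins_true_sum_of_exists_option_equiv (hopt Gj hGj) hX (hu false)
    · obtain ⟨G1, hG1, hG1t⟩ := hhead
      refine wins_true_sum_opts_of_mem hG1 ((hG1t.wins_sum_iff hX p false).2 ?_)
      rw [sum_opts_of_isTerminal hs, List.map_singleton, wins_false_opts_iff]
      simpa using hu true
  | opts xs ih =>
    have hwt := hw
    rw [sum_of_isTerminal_opts ht] at hw
    rw [sum_opts_opts]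
    cases b
    · rw [wins_false_opts_iff] at hw ⊢
      simp only [List.mem_append, List.mem_map]
      rintro _ (⟨Gj, hGj, rfl⟩ | ⟨x, hx, rfl⟩)
      · exact wins_true_sum_of_exists_option_equiv (hopt Gj hGj) hX hwt
      · exact ih x hx (hX.of_mem hx) p true (hw _ (List.mem_map_of_mem hx))
    · obtain ⟨_, hy, hwy⟩ := wins_true_opts_iff.1 hw
      obtain ⟨x, hx, rfl⟩ := List.mem_map.1 hy
      exact .move p _ _ (List.mem_append_right _ (List.mem_map_of_mem hx))
        (ih x hx (hX.of_mem hx) p false hwy)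

theorem equiv_terminal_of_bypass (ht : IsTerminal t) (hhead : ∃ G1 ∈ Gs, equiv G1 (opts [t]))
    (hopt : ∀ Gj ∈ Gs, ∃ js, Gj = opts js ∧ ∃ g ∈ js, equiv g t) : equiv (opts Gs) t := by
  intro X hX
  have hforward := wins_sum_opts_of_wins_sum_terminal ht hhead hopt X hX
  refine outcome_eq_iff.2 fun p b => ⟨fun hG => ?_, hforward p b⟩
  rw [wins_iff_not_wins_opp] at hG ⊢
  exact mt (hforward _ _) hG

end Bypass

end Pos

/-- bypassing simplification: if `G = {G_1,...,G_n}` with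
`G_1 ≡ {*L}` and every option `G_j` of `G` has an option `≡ *L`, then `G ≡ *L`;
and the analogous statement with `*L` replaced by `*R`. -/
theorem bypass_simplification :
    (∀ (G1 : Pos) (rest : List Pos), (Pos.opts (G1 :: rest)).Valid →
      Pos.equiv G1 (Pos.opts [Pos.termL]) →
      (∀ Gj ∈ G1 :: rest, ∃ js : List Pos, Gj = Pos.opts js ∧
        ∃ g ∈ js, Pos.equiv g Pos.termL) →
      Pos.equiv (Pos.opts (G1 :: rest)) Pos.termL) ∧
    (∀ (G1 : Pos) (rest : List Pos), (Pos.opts (G1 :: rest)).Valid →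
      Pos.equiv G1 (Pos.opts [Pos.termR]) →
      (∀ Gj ∈ G1 :: rest, ∃ js : List Pos, Gj = Pos.opts js ∧
        ∃ g ∈ js, Pos.equiv g Pos.termR) →
      Pos.equiv (Pos.opts (G1 :: rest)) Pos.termR) :=
  ⟨fun G1 _ _ hG1 => Pos.equiv_terminal_of_bypass .termL ⟨G1, List.mem_cons_self, hG1⟩,
   fun G1 _ _ hG1 => Pos.equiv_terminal_of_bypass .termR ⟨G1, List.mem_cons_self, hG1⟩⟩
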